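/- Similarity and bisimilarity are closed under retraction: if σ₁ → σ₁'', σ₁' → σ₁'', σ₂ → σ₂'', σ₂' → σ₂'' (silent steps) and σ₁ R σ₂, then σ₁' R σ₂', where R is (bi)similarity. -/
import Mathlib


variable {S E V : Type*}

/-- A configuration is terminal if it has no transitions. -/
def Terminal (step : S → E → S → Prop) (σ : S) : Prop :=
  ∀ φ σ', ¬ step σ φ σ'

/-- The silent step relation. -/
def Silent (step : S → E → S → Prop) (τ : E) (σ σ' : S) : Prop :=
  step σ τ σ'

/-- σ terminates with result w. -/
def Terminates (step : S → E → S → Prop) (τ : E) (res : S → Option V)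
    (σ : S) (w : Option V) : Prop :=
  ∃ σ', Relation.ReflTransGen (Silent step τ) σ σ' ∧ Terminal step σ' ∧ res σ' = w

/-- σ is ready: it can take a step, and its next event cannot be τ. -/
def Ready (step : S → E → S → Prop) (τ : E) (σ : S) : Prop :=
  (∃ φ σ', step σ φ σ') ∧ ∀ φ σ', step σ φ σ' → φ ≠ τ

/-- Generating function for bisimilarity: rules Bisim-Term, Bisim-Silent, Bisim-Extern. -/
def BisimF (step : S → E → S → Prop) (τ : E) (res : S → Option V)
    (R : S → S → Prop) (σ₁ σ₂ : S) : Prop :=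
  (∃ w, Terminates step τ res σ₁ w ∧ Terminates step τ res σ₂ w)
  ∨ (∃ σ₁' σ₂', Relation.TransGen (Silent step τ) σ₁ σ₁' ∧
        Relation.TransGen (Silent step τ) σ₂ σ₂' ∧ R σ₁' σ₂')
  ∨ (∃ σ₁' σ₂', Relation.ReflTransGen (Silent step τ) σ₁ σ₁' ∧
        Relation.ReflTransGen (Silent step τ) σ₂ σ₂' ∧
        Ready step τ σ₁' ∧ Ready step τ σ₂' ∧
        (∀ φ σ₁'', step σ₁' φ σ₁'' → ∃ σ₂'', step σ₂' φ σ₂'' ∧ R σ₁'' σ₂'') ∧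
        (∀ φ σ₂'', step σ₂' φ σ₂'' → ∃ σ₁'', step σ₁' φ σ₁'' ∧ R σ₂'' σ₁''))

/-- Generating function for similarity: additionally the rule Sim-Error. -/
def SimF (step : S → E → S → Prop) (τ : E) (res : S → Option V)
    (R : S → S → Prop) (σ₁ σ₂ : S) : Prop :=
  BisimF step τ res R σ₁ σ₂
  ∨ (∃ σ₁', Relation.ReflTransGen (Silent step τ) σ₁ σ₁' ∧
        Terminal step σ₁' ∧ res σ₁' = none)

/-- Bisimilarity: the greatest relation closed under the rules. -/
def Bisim (step : S → E → S → Prop) (τ : E) (res : S → Option V)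
    (σ₁ σ₂ : S) : Prop :=
  ∃ R : S → S → Prop, (∀ a b, R a b → BisimF step τ res R a b) ∧ R σ₁ σ₂

/-- Similarity: the greatest relation closed under the rules incl. Sim-Error. -/
def Sim (step : S → E → S → Prop) (τ : E) (res : S → Option V)
    (σ₁ σ₂ : S) : Prop :=
  ∃ R : S → S → Prop, (∀ a b, R a b → SimF step τ res R a b) ∧ R σ₁ σ₂

/-- Action-determinism. -/
def ActionDet (step : S → E → S → Prop) : Prop :=
  ∀ σ φ σ₁ σ₂, step σ φ σ₁ → step σ φ σ₂ → σ₁ = σ₂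

/-- τ-determinism. -/
def TauDet (step : S → E → S → Prop) (τ : E) : Prop :=
  ∀ σ φ σ₁ σ₂, step σ φ σ₁ → step σ τ σ₂ → φ = τ

/-- Results occur only at terminal configurations. -/
def ResTerminal (step : S → E → S → Prop) (res : S → Option V) : Prop :=
  ∀ σ v, res σ = some v → Terminal step σ

def RNSteps (r : S → S → Prop) : ℕ → S → S → Prop
  | 0, a, b => a = b
  | n+1, a, b => ∃ c, r a c ∧ RNSteps r n c b

lemma RNSteps.toRTG {r : S → S → Prop} : ∀ {n a b}, RNSteps r n a b →
    Relation.ReflTransGen r a b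
  | 0, _, _, h => by cases h; rfl
  | n+1, _, _, ⟨c, hc, h⟩ => (Relation.ReflTransGen.single hc).trans h.toRTG

lemma RNSteps.snoc {r : S → S → Prop} : ∀ {n a b c}, RNSteps r n a b → r b c →
    RNSteps r (n+1) a c
  | 0, _, _, _, h, hbc => by cases h; exact ⟨_, hbc, rfl⟩
  | n+1, _, _, _, ⟨d, hd, h⟩, hbc => ⟨d, hd, h.snoc hbc⟩

lemma rtg_nsteps {r : S → S → Prop} {a b : S} (h : Relation.ReflTransGen r a b) :
    ∃ n, RNSteps r n a b := by
  induction h with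
  | refl => exact ⟨0, rfl⟩
  | tail _ hbc ih => obtain ⟨n, hn⟩ := ih; exact ⟨n+1, hn.snoc hbc⟩

lemma tg_nsteps {r : S → S → Prop} {a b : S} (h : Relation.TransGen r a b) :
    ∃ n, 0 < n ∧ RNSteps r n a b := by
  induction h with
  | single hab => exact ⟨1, one_pos, _, hab, rfl⟩
  | tail _ hbc ih => obtain ⟨n, hn, h⟩ := ih; exact ⟨n+1, n.succ_pos, h.snoc hbc⟩

lemma RNSteps.pos_step {r : S → S → Prop} {n : ℕ} {a b : S}
    (hn : 0 < n) (h : RNSteps r n a b) : ∃ c, r a c := by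
  cases n with
  | zero => exact absurd hn (lt_irrefl 0)
  | succ n => obtain ⟨c, hc, _⟩ := h; exact ⟨c, hc⟩

/-- Determinism splits iterated runs. -/
lemma nsteps_det_split {r : S → S → Prop} (hdet : ∀ s u v, r s u → r s v → u = v) :
    ∀ {m n : ℕ} {a u v : S}, RNSteps r m a u → RNSteps r n a v → m ≤ n →
      RNSteps r (n - m) u v := by
  intro m
  induction m with
  | zero => intro n a u v hu hv _; cases hu; simpa using hv
  | succ m ih =>
    intro n a u v hu hv hmn
    obtain ⟨c, hc, hu⟩ := hu
    cases n with
    | zero => omega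
    | succ n =>
      obtain ⟨c', hc', hv⟩ := hv
      cases hdet _ _ _ hc hc'
      simpa using ih hu hv (by omega)

/-- Linearity of deterministic runs. -/
lemma rtg_linear {r : S → S → Prop} (hdet : ∀ s u v, r s u → r s v → u = v)
    {a x y : S} (hx : Relation.ReflTransGen r a x) (hy : Relation.ReflTransGen r a y) :
    Relation.ReflTransGen r x y ∨ Relation.ReflTransGen r y x := by
  obtain ⟨m, hm⟩ := rtg_nsteps hx
  obtain ⟨n, hn⟩ := rtg_nsteps hy
  rcases le_total m n with h | h
  · exact Or.inl (nsteps_det_split hdet hm hn h).toRTG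
  · exact Or.inr (nsteps_det_split hdet hn hm h).toRTG

lemma stuck_rtg {r : S → S → Prop} {t x : S} (ht : ∀ z, ¬ r t z)
    (h : Relation.ReflTransGen r t x) : x = t := by
  rcases h.cases_head with h | ⟨c, hc, _⟩
  · exact h.symm
  · exact absurd hc (ht c)

section Main

variable (step : S → E → S → Prop) (τ : E) (res : S → Option V)

/-- Error: reaches a stuck state with no result. -/
def ErrC (σ : S) : Prop :=
  ∃ σ', Relation.ReflTransGen (Silent step τ) σ σ' ∧ Terminal step σ' ∧ res σ' = none

def Diverges (σ : S) : Prop :=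
  ∀ x, Relation.ReflTransGen (Silent step τ) σ x → ∃ y, Silent step τ x y

variable {step τ res}

lemma silent_det (hA : ActionDet step) :
    ∀ s u v, Silent step τ s u → Silent step τ s v → u = v :=
  fun s u v hu hv => hA s τ u v hu hv

lemma div_mono {a x : S} (h : Diverges step τ a)
    (hax : Relation.ReflTransGen (Silent step τ) a x) : Diverges step τ x :=
  fun y hy => h y (hax.trans hy)

lemma terminal_no_silent {t : S} (ht : Terminal step t) : ∀ z, ¬ Silent step τ t z :=
  fun z hz => ht τ z hz

lemma ready_no_silent {t : S} (ht : Ready step τ t) : ∀ z, ¬ Silent step τ t z :=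
  fun z hz => ht.2 τ z hz rfl

/-- Divergence transfers across a closed relation. -/
lemma div_transfer {R : S → S → Prop} (hA : ActionDet step)
    (hcl : ∀ a b, R a b → BisimF step τ res R a b ∨ ErrC step τ res a) :
    ∀ n {a b y : S}, R a b → Diverges step τ a → RNSteps (Silent step τ) n b y →
      ∃ z, Silent step τ y z := by
  intro n
  induction n using Nat.strong_induction_on with
  | _ n ih =>
    intro a b y hab hdiv hby
    rcases hcl a b hab with (⟨w, ⟨t, hat, htt, _⟩, _⟩ | ⟨a1, b1, ha1, hb1, hR1⟩ |
        ⟨a1, b1, ha1, hb1, hr1, _, _, _⟩) | ⟨t, hat, htt, _⟩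
    · obtain ⟨z, hz⟩ := hdiv t hat
      exact absurd hz (terminal_no_silent htt z)
    · obtain ⟨k, hk, hkb⟩ := tg_nsteps hb1
      rcases le_or_gt k n with h | h
      · exact ih (n - k) (by omega) hR1 (div_mono hdiv ha1.to_reflTransGen)
          (nsteps_det_split (silent_det hA) hkb hby h)
      · have := nsteps_det_split (silent_det hA) hby hkb (le_of_lt h)
        exact this.pos_step (by omega)
    · obtain ⟨z, hz⟩ := hdiv a1 ha1
      exact absurd hz (ready_no_silent hr1 z)
    · obtain ⟨z, hz⟩ := hdiv t hat
      exact absurd hz (terminal_no_silent htt z)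
/-! ### Extraction of non-silent behaviour when not diverging -/

lemma extract {R : S → S → Prop} (hA : ActionDet step) (allowErr : Prop)
    (hcl : ∀ a b, R a b → BisimF step τ res R a b ∨ (allowErr ∧ ErrC step τ res a)) :
    ∀ n {a b t : S}, R a b → RNSteps (Silent step τ) n a t →
      (∀ z, ¬ Silent step τ t z) →
      (∃ w, Terminates step τ res a w ∧ Terminates step τ res b w)
      ∨ (∃ a' b', Relation.ReflTransGen (Silent step τ) a a' ∧
            Relation.ReflTransGen (Silent step τ) b b' ∧
            Ready step τ a' ∧ Ready step τ b' ∧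
            (∀ φ σ₁'', step a' φ σ₁'' → ∃ σ₂'', step b' φ σ₂'' ∧ R σ₁'' σ₂'') ∧
            (∀ φ σ₂'', step b' φ σ₂'' → ∃ σ₁'', step a' φ σ₁'' ∧ R σ₂'' σ₁''))
      ∨ (allowErr ∧ ErrC step τ res a) := by
  intro n
  induction n using Nat.strong_induction_on with
  | _ n ih =>
    intro a b t hab hat hstuck
    rcases hcl a b hab with (hterm | ⟨a1, b1, ha1, hb1, hR1⟩ | hext) | ⟨hae, herr⟩
    · exact Or.inl hterm
    · obtain ⟨k, hk, hka⟩ := tg_nsteps ha1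
      have hkn : k ≤ n := by
        by_contra h
        have hsp := nsteps_det_split (silent_det hA) hat hka (by omega)
        obtain ⟨z, hz⟩ := hsp.pos_step (by omega)
        exact hstuck z hz
      have hsplit := nsteps_det_split (silent_det hA) hka hat hkn
      rcases ih (n - k) (by omega) hR1 hsplit hstuck with
          ⟨w, ⟨u, hu, hut, hures⟩, v, hv, hvt, hvres⟩
          | ⟨a', b', ha', hb', rest⟩ | ⟨hae, u, hu, hrest⟩
      · exact Or.inl ⟨w, ⟨u, ha1.to_reflTransGen.trans hu, hut, hures⟩,
          ⟨v, hb1.to_reflTransGen.trans hv, hvt, hvres⟩⟩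
      · exact Or.inr (Or.inl ⟨a', b', ha1.to_reflTransGen.trans ha',
          hb1.to_reflTransGen.trans hb', rest⟩)
      · exact Or.inr (Or.inr ⟨hae, u, ha1.to_reflTransGen.trans hu, hrest⟩)
    · obtain ⟨a', b', ha', hb', rest⟩ := hext
      exact Or.inr (Or.inl ⟨a', b', ha', hb', rest⟩)
    · exact Or.inr (Or.inr ⟨hae, herr⟩)

/-- The descendant closure of a relation. -/
def Desc (step : S → E → S → Prop) (τ : E) (R : S → S → Prop) (x y : S) : Prop :=
  ∃ a b, R a b ∧ Relation.ReflTransGen (Silent step τ) a x ∧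
    Relation.ReflTransGen (Silent step τ) b y

/-- Main lemma: the descendant closure of a closed relation is closed. -/
lemma main_step {R : S → S → Prop} (hA : ActionDet step) (allowErr : Prop)
    (hcl : ∀ a b, R a b → BisimF step τ res R a b ∨ (allowErr ∧ ErrC step τ res a))
    {x y : S} (hxy : Desc step τ R x y) :
    BisimF step τ res (Desc step τ R) x y ∨ (allowErr ∧ ErrC step τ res x) := by
  obtain ⟨a, b, hab, hax, hby⟩ := hxy
  by_cases hdiv : Diverges step τ a
  · -- diverging case : both sides can always take a silent step
    obtain ⟨x', hx'⟩ := (div_mono hdiv hax) x Relation.ReflTransGen.refl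
    have hdivb : Diverges step τ b := by
      intro z hz
      obtain ⟨n, hn⟩ := rtg_nsteps hz
      exact div_transfer hA (fun a b h => (hcl a b h).imp id And.right) n hab hdiv hn
    obtain ⟨y', hy'⟩ := (div_mono hdivb hby) y Relation.ReflTransGen.refl
    exact Or.inl (Or.inr (Or.inl ⟨x', y', Relation.TransGen.single hx',
      Relation.TransGen.single hy', a, b, hab, hax.tail hx', hby.tail hy'⟩))
  · -- non-diverging case : extract a non-silent behaviour
    simp only [Diverges, not_forall, not_exists] at hdiv
    obtain ⟨t, hat, hstuck'⟩ := hdiv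
    obtain ⟨n, hn⟩ := rtg_nsteps hat
    rcases extract hA allowErr hcl n hab hn hstuck' with
        ⟨w, ⟨u, hau, hut, hures⟩, v, hbv, hvt, hvres⟩
        | ⟨a', b', ha', hb', ra', rb', m1, m2⟩
        | ⟨hae, u, hau, hut, hures⟩
    · have hxu : Relation.ReflTransGen (Silent step τ) x u := by
        rcases rtg_linear (silent_det hA) hax hau with h | h
        · exact h
        · rw [stuck_rtg (terminal_no_silent hut) h]
      have hyv : Relation.ReflTransGen (Silent step τ) y v := by
        rcases rtg_linear (silent_det hA) hby hbv with h | h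
        · exact h
        · rw [stuck_rtg (terminal_no_silent hvt) h]
      exact Or.inl (Or.inl ⟨w, ⟨u, hxu, hut, hures⟩, v, hyv, hvt, hvres⟩)
    · have hxa : Relation.ReflTransGen (Silent step τ) x a' := by
        rcases rtg_linear (silent_det hA) hax ha' with h | h
        · exact h
        · rw [stuck_rtg (ready_no_silent ra') h]
      have hyb : Relation.ReflTransGen (Silent step τ) y b' := by
        rcases rtg_linear (silent_det hA) hby hb' with h | h
        · exact h
        · rw [stuck_rtg (ready_no_silent rb') h]
      refine Or.inl (Or.inr (Or.inr ⟨a', b', hxa, hyb, ra', rb', ?_, ?_⟩))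
      · intro φ s h
        obtain ⟨s', hs', hRs⟩ := m1 φ s h
        exact ⟨s', hs', s, s', hRs, Relation.ReflTransGen.refl, Relation.ReflTransGen.refl⟩
      · intro φ s h
        obtain ⟨s', hs', hRs⟩ := m2 φ s h
        exact ⟨s', hs', s, s', hRs, Relation.ReflTransGen.refl, Relation.ReflTransGen.refl⟩
    · refine Or.inr ⟨hae, u, ?_, hut, hures⟩
      rcases rtg_linear (silent_det hA) hax hau with h | h
      · exact h
      · rw [stuck_rtg (terminal_no_silent hut) h]

/-- Bisimilarity transfers to silent descendants. -/
lemma bisim_desc (hA : ActionDet step) {a b x y : S}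
    (h : Bisim step τ res a b)
    (hax : Relation.ReflTransGen (Silent step τ) a x)
    (hby : Relation.ReflTransGen (Silent step τ) b y) :
    Bisim step τ res x y := by
  obtain ⟨R, hcl, hab⟩ := h
  refine ⟨Desc step τ R, ?_, a, b, hab, hax, hby⟩
  intro u v huv
  rcases main_step hA False (fun a b h => Or.inl (hcl a b h)) huv with h | ⟨h, _⟩
  · exact h
  · exact h.elim

/-- Similarity transfers to silent descendants. -/
lemma sim_desc (hA : ActionDet step) {a b x y : S}
    (h : Sim step τ res a b)
    (hax : Relation.ReflTransGen (Silent step τ) a x)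
    (hby : Relation.ReflTransGen (Silent step τ) b y) :
    Sim step τ res x y := by
  obtain ⟨R, hcl, hab⟩ := h
  refine ⟨Desc step τ R, ?_, a, b, hab, hax, hby⟩
  intro u v huv
  rcases main_step hA True (fun a b h => (hcl a b h).imp id (fun e => ⟨trivial, e⟩)) huv with
      h | ⟨_, h⟩
  · exact Or.inl h
  · exact Or.inr h

lemma bisimF_mono {R R' : S → S → Prop} (h : ∀ a b, R a b → R' a b) {a b : S}
    (hab : BisimF step τ res R a b) : BisimF step τ res R' a b := by
  rcases hab with hterm | ⟨a1, b1, ha1, hb1, hR⟩ | ⟨a1, b1, ha1, hb1, r1, r2, m1, m2⟩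
  · exact Or.inl hterm
  · exact Or.inr (Or.inl ⟨a1, b1, ha1, hb1, h _ _ hR⟩)
  · refine Or.inr (Or.inr ⟨a1, b1, ha1, hb1, r1, r2, ?_, ?_⟩)
    · intro φ s hs; obtain ⟨s', hs', hR⟩ := m1 φ s hs; exact ⟨s', hs', h _ _ hR⟩
    · intro φ s hs; obtain ⟨s', hs', hR⟩ := m2 φ s hs; exact ⟨s', hs', h _ _ hR⟩

lemma bisim_dest {a b : S} (h : Bisim step τ res a b) :
    BisimF step τ res (Bisim step τ res) a b := by
  obtain ⟨R, hcl, hab⟩ := h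
  exact bisimF_mono (fun x y hxy => ⟨R, hcl, hxy⟩) (hcl a b hab)

lemma sim_dest {a b : S} (h : Sim step τ res a b) :
    SimF step τ res (Sim step τ res) a b := by
  obtain ⟨R, hcl, hab⟩ := h
  rcases hcl a b hab with h' | herr
  · exact Or.inl (bisimF_mono (fun x y hxy => ⟨R, hcl, hxy⟩) h')
  · exact Or.inr herr

end Main

theorem sim_bisim_retract (step : S → E → S → Prop) (τ : E)
    (res : S → Option V)
    (hA : ActionDet step) (hT : TauDet step τ) (hR : ResTerminal step res)
    {σ₁ σ₁' σ₁'' σ₂ σ₂' σ₂'' : S}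
    (h₁ : Silent step τ σ₁ σ₁'') (h₁' : Silent step τ σ₁' σ₁'')
    (h₂ : Silent step τ σ₂ σ₂'') (h₂' : Silent step τ σ₂' σ₂'') :
    (Bisim step τ res σ₁ σ₂ → Bisim step τ res σ₁' σ₂') ∧
    (Sim step τ res σ₁ σ₂ → Sim step τ res σ₁' σ₂') := by
  constructor
  · intro h
    have h'' : Bisim step τ res σ₁'' σ₂'' :=
      bisim_desc hA h (Relation.ReflTransGen.single h₁) (Relation.ReflTransGen.single h₂)
    refine ⟨fun x y => Bisim step τ res x y ∨ (x = σ₁' ∧ y = σ₂'), ?_, Or.inr ⟨rfl, rfl⟩⟩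
    rintro a b (hab | ⟨rfl, rfl⟩)
    · exact bisimF_mono (fun x y hxy => Or.inl hxy) (bisim_dest hab)
    · exact Or.inr (Or.inl ⟨σ₁'', σ₂'', Relation.TransGen.single h₁',
        Relation.TransGen.single h₂', Or.inl h''⟩)
  · intro h
    have h'' : Sim step τ res σ₁'' σ₂'' :=
      sim_desc hA h (Relation.ReflTransGen.single h₁) (Relation.ReflTransGen.single h₂)
    refine ⟨fun x y => Sim step τ res x y ∨ (x = σ₁' ∧ y = σ₂'), ?_, Or.inr ⟨rfl, rfl⟩⟩
    rintro a b (hab | ⟨rfl, rfl⟩)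
    · rcases sim_dest hab with h' | herr
      · exact Or.inl (bisimF_mono (fun x y hxy => Or.inl hxy) h')
      · exact Or.inr herr
    · exact Or.inl (Or.inr (Or.inl ⟨σ₁'', σ₂'', Relation.TransGen.single h₁',
        Relation.TransGen.single h₂', Or.inl h''⟩))
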